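/- arXiv:math/0305369 — 3 statements merged into one kernel-verified Lean document; each statement's English description precedes it below -/
import Mathlib

section
/- Let m ∈ ℤ^+ and let P_0(x),...,P_{m−1}(x) ∈ ℂ[x] have degrees 0,...,m−1 respectively. Let m_1,...,m_k ∈ ℤ and μ_1,...,μ_k ∈ ℂ. If A = {a_s(n_s)}_{s=1}^k forms an m-cover of ℤ, then for all real θ with 0 ≤ θ < 1 and all n ∈ {0,1,...,m−1}: Σ_{I ⊆ {1,...,k}, {Σ_{s∈I} m_s/n_s} = θ} (−1)^{|I|} P_n(Σ_{s∈I} μ_s) e^{2πi Σ_{s∈I} a_s m_s/n_s} = 0. Conversely, if these equations hold for all such θ and n, and moreover gcd(m_s, n_s) = 1 and μ_s ≠ 0 for every s, then A forms an m-cover of ℤ. -/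
open Polynomial Finset

namespace Stmt16Aux

/-! ### The exponential `E q = e^{2πiq}` -/

noncomputable def E (q : ℚ) : ℂ := Complex.exp (2 * Real.pi * Complex.I * (q : ℂ))

lemma E_add (p q : ℚ) : E (p + q) = E p * E q := by
  rw [E, E, E, ← Complex.exp_add]
  push_cast
  ring_nf

lemma E_int (z : ℤ) : E z = 1 := by
  rw [E]
  rw [show ((2:ℂ) * Real.pi * Complex.I * ((z:ℚ):ℂ)) = (z:ℂ) * (2 * Real.pi * Complex.I) by
    push_cast; ring]
  exact Complex.exp_int_mul_two_pi_mul_I z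

lemma E_zero : E 0 = 1 := by
  have := E_int 0
  simpa using this

lemma E_eq_one_iff {q : ℚ} : E q = 1 ↔ ∃ z : ℤ, q = z := by
  rw [E, Complex.exp_eq_one_iff]
  constructor
  · rintro ⟨z, hz⟩
    refine ⟨z, ?_⟩
    have h2 : (2 * Real.pi * Complex.I : ℂ) ≠ 0 := by
      refine mul_ne_zero (mul_ne_zero two_ne_zero ?_) Complex.I_ne_zero
      exact_mod_cast Real.pi_ne_zero
    have := mul_right_cancel₀ h2
      (by rw [← hz]; ring : ((q:ℚ):ℂ) * (2 * Real.pi * Complex.I) = (z:ℂ) * (2 * Real.pi * Complex.I))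
    exact_mod_cast this
  · rintro ⟨z, hz⟩
    exact ⟨z, by rw [hz]; push_cast; ring⟩

lemma E_pow (q : ℚ) (x : ℕ) : E q ^ x = E (x * q) := by
  rw [E, E, ← Complex.exp_nat_mul]
  push_cast
  ring_nf

lemma E_sum {α : Type*} (s : Finset α) (f : α → ℚ) : E (∑ i ∈ s, f i) = ∏ i ∈ s, E (f i) := by
  classical
  induction s using Finset.induction_on with
  | empty => simp [E_zero]
  | @insert t s ht ih => rw [Finset.sum_insert ht, Finset.prod_insert ht, E_add, ih]

lemma E_eq_of_sub_int {p q : ℚ} (h : ∃ z : ℤ, p - q = z) : E p = E q := by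
  obtain ⟨z, hz⟩ := h
  have : p = q + (z : ℚ) := by rw [← hz]; ring
  rw [this, E_add, E_int, mul_one]

/-! ### Orthogonality -/

lemma orth (N : ℕ) (hN : 0 < N) (q r : ℚ)
    (hq : ∃ z : ℤ, (N : ℚ) * q = z) (hr : ∃ z : ℤ, (N : ℚ) * r = z)
    (hq0 : 0 ≤ q) (hq1 : q < 1) (hr0 : 0 ≤ r) (hr1 : r < 1) :
    ∑ x ∈ Finset.range N, E ((x : ℚ) * (q - r)) = if q = r then (N : ℂ) else 0 := by
  rcases eq_or_ne q r with rfl | hne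
  · simp [E_zero]
  · rw [if_neg hne]
    have hz1 : E (q - r) ≠ 1 := by
      intro h
      obtain ⟨z, hz⟩ := E_eq_one_iff.mp h
      have : z = 0 := by
        have h1 : (z : ℚ) < 1 := by rw [← hz]; linarith
        have h2 : (-1 : ℚ) < z := by rw [← hz]; linarith
        exact_mod_cast (by
          constructor <;> [exact_mod_cast h2; exact_mod_cast h1] :
            (-1 : ℤ) < z ∧ (z : ℤ) < 1) |>.elim (fun a b => by omega)
      apply hne
      have : q - r = 0 := by rw [hz, this]; simp
      linarith
    have hgeom : ∀ x : ℕ, E ((x : ℚ) * (q - r)) = E (q - r) ^ x := fun x => (E_pow _ _).symm ▸ rfl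
    calc ∑ x ∈ Finset.range N, E ((x : ℚ) * (q - r))
        = ∑ x ∈ Finset.range N, E (q - r) ^ x := by
          refine Finset.sum_congr rfl fun x _ => ?_
          rw [E_pow]
      _ = (E (q - r) ^ N - 1) / (E (q - r) - 1) := geom_sum_eq hz1 N
      _ = 0 := by
          have : E (q - r) ^ N = 1 := by
            rw [E_pow, ← Stmt16Aux.E_zero]
            apply E_eq_of_sub_int
            obtain ⟨z1, hz1'⟩ := hq
            obtain ⟨z2, hz2'⟩ := hr
            refine ⟨z1 - z2, ?_⟩
            push_cast
            rw [← hz1', ← hz2']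
            ring
          rw [this]
          simp

/-! ### Iterated differences -/


variable {k : ℕ} (μ : Fin k → ℂ) (ω : Fin k → ℂ)

/-- Iterated difference operator. -/
noncomputable def DIter (T : Finset (Fin k)) (Q : ℂ[X]) : ℂ[X] :=
  ∑ J ∈ T.powerset, (-1 : ℂ) ^ J.card • taylor (∑ s ∈ J, μ s) Q

lemma DIter_empty (Q : ℂ[X]) : DIter μ ∅ Q = Q := by
  simp [DIter]

lemma DIter_add (T : Finset (Fin k)) (Q R : ℂ[X]) :
    DIter μ T (Q + R) = DIter μ T Q + DIter μ T R := by
  simp [DIter, smul_add, Finset.sum_add_distrib]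

lemma DIter_sub (T : Finset (Fin k)) (Q R : ℂ[X]) :
    DIter μ T (Q - R) = DIter μ T Q - DIter μ T R := by
  simp [DIter, smul_sub, Finset.sum_sub_distrib]

lemma DIter_zero (T : Finset (Fin k)) : DIter μ T 0 = 0 := by
  simp [DIter]

lemma DIter_taylor (T : Finset (Fin k)) (c : ℂ) (Q : ℂ[X]) :
    DIter μ T (taylor c Q) = taylor c (DIter μ T Q) := by
  simp only [DIter, map_sum, map_smul, taylor_taylor]
  exact Finset.sum_congr rfl fun J _ => by rw [add_comm]

lemma DIter_insert {T : Finset (Fin k)} {t : Fin k} (ht : t ∉ T) (Q : ℂ[X]) :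
    DIter μ (insert t T) Q = DIter μ T Q - taylor (μ t) (DIter μ T Q) := by
  rw [DIter, Finset.sum_powerset_insert ht]
  rw [show (∑ J ∈ T.powerset, (-1:ℂ) ^ (insert t J).card • taylor (∑ s ∈ insert t J, μ s) Q)
      = -∑ J ∈ T.powerset, (-1:ℂ) ^ J.card • taylor (μ t) (taylor (∑ s ∈ J, μ s) Q) from ?_]
  · rw [DIter, map_sum]
    simp only [map_smul]
    ring
  · rw [← Finset.sum_neg_distrib]
    refine Finset.sum_congr rfl fun J hJ => ?_
    have htJ : t ∉ J := fun h => ht (Finset.mem_powerset.mp hJ h)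
    rw [Finset.card_insert_of_notMem htJ, Finset.sum_insert htJ, taylor_taylor, pow_succ]
    rw [add_comm (μ t)]
    module



lemma taylor_leadingCoeff (c : ℂ) (Q : ℂ[X]) :
    (taylor c Q).leadingCoeff = Q.leadingCoeff := by
  rcases eq_or_ne Q 0 with rfl | hQ
  · simp
  unfold Polynomial.leadingCoeff
  rw [natDegree_taylor, taylor_coeff]
  have hd : (hasseDeriv Q.natDegree Q).natDegree = 0 := by
    have := natDegree_hasseDeriv Q Q.natDegree
    omega
  rw [Polynomial.eq_C_of_natDegree_eq_zero hd, eval_C]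
  simp [hasseDeriv_coeff]

lemma taylor_ne_zero {c : ℂ} {Q : ℂ[X]} (hQ : Q ≠ 0) : taylor c Q ≠ 0 := by
  intro h
  apply hQ
  have := taylor_leadingCoeff c Q
  rw [h, leadingCoeff_zero] at this
  exact leadingCoeff_eq_zero.mp this.symm

lemma taylor_degree (c : ℂ) (Q : ℂ[X]) : (taylor c Q).degree = Q.degree := by
  rcases eq_or_ne Q 0 with rfl | hQ
  · simp
  rw [degree_eq_natDegree (taylor_ne_zero hQ), degree_eq_natDegree hQ, natDegree_taylor]

/-- D1: the difference operator strictly decreases degree. -/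
lemma degree_diff_lt {c : ℂ} {Q : ℂ[X]} (hQ : Q ≠ 0) :
    (Q - taylor c Q).degree < Q.degree :=
  degree_sub_lt (taylor_degree c Q).symm hQ (taylor_leadingCoeff c Q).symm

/-- D2: for nonconstant Q, the difference has degree exactly one less. -/
lemma diff_exact {c : ℂ} {Q : ℂ[X]} {d : ℕ} (hc : c ≠ 0) (hQ : Q ≠ 0)
    (hd : Q.natDegree = d + 1) :
    (Q - taylor c Q) ≠ 0 ∧ (Q - taylor c Q).natDegree = d := by
  have hcoeff : (Q - taylor c Q).coeff d = -((d + 1 : ℕ) * c * Q.leadingCoeff) := by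
    rw [coeff_sub, taylor_coeff]
    have h1 : (hasseDeriv d Q).natDegree < 2 := by
      have := natDegree_hasseDeriv Q d
      omega
    rw [eval_eq_sum_range' h1]
    rw [Finset.sum_range_succ, Finset.sum_range_one]
    simp only [hasseDeriv_coeff]
    have hl : Q.coeff (1 + d) = Q.leadingCoeff := by
      rw [Polynomial.leadingCoeff, hd, add_comm]
    rw [hl, add_comm 1 d, Nat.choose_succ_self_right]
    simp
    ring
  have hlead : Q.leadingCoeff ≠ 0 := leadingCoeff_ne_zero.mpr hQ
  have hne : (Q - taylor c Q).coeff d ≠ 0 := by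
    rw [hcoeff]
    simp only [ne_eq, neg_eq_zero, mul_eq_zero, not_or]
    refine ⟨⟨?_, hc⟩, hlead⟩
    exact_mod_cast Nat.succ_ne_zero d
  have hne0 : Q - taylor c Q ≠ 0 := fun h => hne (by simp [h])
  refine ⟨hne0, le_antisymm ?_ (le_natDegree_of_ne_zero hne)⟩
  have hlt : (Q - taylor c Q).degree < Q.degree := degree_diff_lt hQ
  rw [degree_eq_natDegree hQ, hd] at hlt
  have : (Q - taylor c Q).degree ≤ (d : ℕ) := by
    exact Order.le_of_lt_succ (by exact_mod_cast hlt)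
  exact natDegree_le_iff_degree_le.mpr this

lemma DIter_insert' {T : Finset (Fin k)} {t : Fin k} (ht : t ∉ T) (Q : ℂ[X]) :
    DIter μ (insert t T) Q = DIter μ T (Q - taylor (μ t) Q) := by
  rw [DIter_insert μ ht, DIter_sub, DIter_taylor]

/-- F1 -/
lemma DIter_eq_zero : ∀ (T : Finset (Fin k)) (Q : ℂ[X]), Q.degree < (T.card : ℕ) →
    DIter μ T Q = 0 := by
  intro T
  induction T using Finset.induction_on with
  | empty =>
    intro Q hQ
    simp only [Finset.card_empty, Nat.cast_zero] at hQ
    rw [DIter_empty]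
    by_contra h
    rw [Polynomial.degree_eq_natDegree h] at hQ
    simp at hQ
  | @insert t T' ht ih =>
    intro Q hQ
    rcases eq_or_ne Q 0 with rfl | hQ0
    · rw [DIter_insert' μ ht, map_zero, sub_self, DIter_zero]
    · rw [DIter_insert' μ ht]
      apply ih
      have h1 : (Q - taylor (μ t) Q).degree < Q.degree := degree_diff_lt hQ0
      have h2 : Q.degree < ((insert t T').card : ℕ) := hQ
      rw [Finset.card_insert_of_notMem ht, Polynomial.degree_eq_natDegree hQ0] at h2
      have h3 : Q.natDegree ≤ T'.card := by
        have : Q.natDegree < T'.card + 1 := by exact_mod_cast h2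
        omega
      calc (Q - taylor (μ t) Q).degree < Q.degree := h1
        _ ≤ (T'.card : ℕ) := by
          rw [Polynomial.degree_eq_natDegree hQ0]
          exact_mod_cast h3

/-- F2 -/
lemma DIter_exact : ∀ (T : Finset (Fin k)), (∀ s ∈ T, μ s ≠ 0) → ∀ (Q : ℂ[X]), Q ≠ 0 →
    Q.natDegree = T.card → ∃ c : ℂ, c ≠ 0 ∧ DIter μ T Q = C c := by
  intro T
  induction T using Finset.induction_on with
  | empty =>
    intro _ Q hQ hd
    simp only [Finset.card_empty] at hd
    refine ⟨Q.coeff 0, ?_, ?_⟩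
    · intro h
      exact hQ (by rw [Polynomial.eq_C_of_natDegree_eq_zero hd, h, map_zero])
    · rw [DIter_empty]
      exact Polynomial.eq_C_of_natDegree_eq_zero hd
  | @insert t T' ht ih =>
    intro hμ Q hQ hd
    rw [Finset.card_insert_of_notMem ht] at hd
    have hμt : μ t ≠ 0 := hμ t (Finset.mem_insert_self t T')
    obtain ⟨hne, hdeg⟩ := diff_exact (Q := Q) (d := T'.card) hμt hQ hd
    rw [DIter_insert' μ ht]
    exact ih (fun s hs => hμ s (Finset.mem_insert_of_mem hs)) _ hne hdeg


noncomputable def G (U : Finset (Fin k)) (Q : ℂ[X]) : ℂ :=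
  ∑ I ∈ U.powerset, (-1 : ℂ) ^ I.card * Q.eval (∑ s ∈ I, μ s) * ∏ s ∈ I, ω s

lemma G_zero (U : Finset (Fin k)) : G μ ω U 0 = 0 := by simp [G]

lemma G_sub (U : Finset (Fin k)) (Q R : ℂ[X]) :
    G μ ω U (Q - R) = G μ ω U Q - G μ ω U R := by
  simp [G, eval_sub, mul_sub, sub_mul, Finset.sum_sub_distrib]

lemma G_smul (U : Finset (Fin k)) (c : ℂ) (Q : ℂ[X]) :
    G μ ω U (c • Q) = c * G μ ω U Q := by
  simp only [G, Finset.mul_sum]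
  refine Finset.sum_congr rfl fun I _ => ?_
  simp [smul_eq_mul]
  ring

lemma G_insert {U : Finset (Fin k)} {t : Fin k} (ht : t ∉ U) (Q : ℂ[X]) :
    G μ ω (insert t U) Q = G μ ω U Q - ω t * G μ ω U (taylor (μ t) Q) := by
  have hB : (∑ I ∈ U.powerset,
      (-1:ℂ)^(insert t I).card * Q.eval (∑ s ∈ insert t I, μ s) * ∏ s ∈ insert t I, ω s)
      = -(ω t * G μ ω U (taylor (μ t) Q)) := by
    rw [G, Finset.mul_sum, ← Finset.sum_neg_distrib]
    refine Finset.sum_congr rfl fun I hI => ?_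
    have htI : t ∉ I := fun h => ht (Finset.mem_powerset.mp hI h)
    rw [Finset.card_insert_of_notMem htI, Finset.sum_insert htI, Finset.prod_insert htI,
      taylor_eval, pow_succ, add_comm (∑ s ∈ I, μ s) (μ t)]
    ring
  rw [G, Finset.sum_powerset_insert ht, hB, ← G]
  ring

lemma G_union : ∀ (T : Finset (Fin k)), ∀ {V : Finset (Fin k)}, Disjoint T V →
    (∀ t ∈ T, ω t = 1) → ∀ Q : ℂ[X], G μ ω (T ∪ V) Q = G μ ω V (DIter μ T Q) := by
  intro T
  induction T using Finset.induction_on with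
  | empty =>
    intro V _ _ Q
    simp only [Finset.empty_union]
    congr 1
    simp [DIter]
  | @insert t T' ht ih =>
    intro V hdisj hω Q
    have htV : t ∉ V := fun h => (Finset.disjoint_left.mp hdisj (Finset.mem_insert_self t T')) h
    have ht' : t ∉ T' ∪ V := by simp [ht, htV]
    have hd' : Disjoint T' V := hdisj.mono_left (Finset.subset_insert t T')
    rw [Finset.insert_union, G_insert μ ω ht', hω t (Finset.mem_insert_self t T'), one_mul,
      ← G_sub, ih hd' (fun s hs => hω s (Finset.mem_insert_of_mem hs)), DIter_insert' μ ht]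

lemma G_const (U : Finset (Fin k)) (c : ℂ) :
    G μ ω U (C c) = c * ∏ s ∈ U, (1 - ω s) := by
  have := Finset.prod_add (fun s : Fin k => -ω s) (fun _ => (1:ℂ)) U
  simp only [Finset.prod_const_one, mul_one] at this
  rw [show (∏ s ∈ U, (1 - ω s)) = ∏ s ∈ U, (-ω s + 1) by
    refine Finset.prod_congr rfl fun s _ => by ring, this, G, Finset.mul_sum]
  refine Finset.sum_congr rfl fun I _ => ?_
  have : ∏ i ∈ I, -ω i = (-1:ℂ)^I.card * ∏ i ∈ I, ω i := by
    rw [← Finset.prod_const (-1:ℂ), ← Finset.prod_mul_distrib]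
    exact Finset.prod_congr rfl fun _ _ => by ring
  rw [eval_C, this]
  ring


/-! ### Spanning lemma -/


lemma span_lemma (mm : ℕ) (hmm : 0 < mm) (P : ℕ → ℂ[X])
    (hP : ∀ j < mm, (P j).degree = (j : ℕ))
    (B : ℂ[X] → ℂ)
    (Bsub : ∀ Q R, B (Q - R) = B Q - B R)
    (Bsmul : ∀ (c : ℂ) Q, B (c • Q) = c * B Q)
    (hBP : ∀ j < mm, B (P j) = 0) :
    ∀ Q : ℂ[X], Q.degree < (mm : ℕ) → B Q = 0 := by
  have B0 : B 0 = 0 := by have := Bsub 0 0; simpa using this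
  suffices h : ∀ d : ℕ, ∀ Q : ℂ[X], Q.natDegree ≤ d → Q.degree < (mm : ℕ) → B Q = 0 by
    intro Q hQ
    exact h Q.natDegree Q le_rfl hQ
  intro d
  induction d with
  | zero =>
    intro Q hQ _
    have hQC : Q = C (Q.coeff 0) := Polynomial.eq_C_of_natDegree_eq_zero (Nat.le_zero.mp hQ)
    have hP0 : (P 0).degree = (0 : ℕ) := hP 0 hmm
    have hP0C : P 0 = C ((P 0).coeff 0) :=
      Polynomial.eq_C_of_natDegree_eq_zero (natDegree_eq_of_degree_eq_some hP0)
    have hb : (P 0).coeff 0 ≠ 0 := by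
      intro h
      rw [h, map_zero] at hP0C
      rw [hP0C] at hP0
      simp at hP0
    have : Q = (Q.coeff 0 / (P 0).coeff 0) • P 0 := by
      conv_lhs => rw [hQC]
      conv_rhs => rw [hP0C]
      rw [smul_C]
      congr 1
      rw [coeff_C_zero, smul_eq_mul]
      exact (div_mul_cancel₀ _ hb).symm
    rw [this, Bsmul, hBP 0 hmm, mul_zero]
  | succ d ih =>
    intro Q hQ hdeg
    rcases Nat.lt_or_ge Q.natDegree (d + 1) with h | h
    · exact ih Q (by omega) hdeg
    have hnd : Q.natDegree = d + 1 := le_antisymm hQ h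
    have hQ0 : Q ≠ 0 := by
      intro h0
      rw [h0] at hnd
      simp at hnd
    have hdQ : Q.degree = ((d + 1 : ℕ) : WithBot ℕ) := by
      rw [degree_eq_natDegree hQ0, hnd]
    have he : d + 1 < mm := by
      rw [hdQ] at hdeg
      exact_mod_cast hdeg
    have hPe : (P (d+1)).degree = ((d+1 : ℕ) : WithBot ℕ) := hP (d+1) he
    have hPe0 : P (d+1) ≠ 0 := fun h => by
      rw [h, degree_zero] at hPe
      exact WithBot.bot_ne_coe (α := ℕ) (by exact_mod_cast hPe)
    have hlb : (P (d+1)).leadingCoeff ≠ 0 := leadingCoeff_ne_zero.mpr hPe0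
    set c := Q.leadingCoeff / (P (d+1)).leadingCoeff with hc
    have hcne : c ≠ 0 := div_ne_zero (leadingCoeff_ne_zero.mpr hQ0) hlb
    have hsm : Q.degree = (c • P (d+1)).degree := by
      rw [smul_eq_C_mul, degree_C_mul hcne, hPe, hdQ]
    have hlc : Q.leadingCoeff = (c • P (d+1)).leadingCoeff := by
      rw [smul_eq_C_mul, leadingCoeff_mul, leadingCoeff_C, hc, div_mul_cancel₀ _ hlb]
    have hsub : (Q - c • P (d+1)).degree < Q.degree := degree_sub_lt hsm hQ0 hlc
    have h1 : (Q - c • P (d+1)).natDegree ≤ d := by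
      rcases eq_or_ne (Q - c • P (d+1)) 0 with h0 | h0
      · simp [h0]
      · have := hsub
        rw [degree_eq_natDegree h0, hdQ] at this
        have : (Q - c • P (d+1)).natDegree < d + 1 := by exact_mod_cast this
        omega
    have h2 : (Q - c • P (d+1)).degree < (mm : ℕ) := lt_trans hsub hdeg
    have hBQ' : B (Q - c • P (d+1)) = 0 := ih _ h1 h2
    rw [Bsub, Bsmul, hBP (d+1) he, mul_zero, sub_zero] at hBQ'
    exact hBQ'

/-! ### Bridge -/

open scoped Classical

section Bridge

variable {k : ℕ} (a : Fin k → ℤ) (n : Fin k → ℕ) (m : Fin k → ℤ) (μ : Fin k → ℂ)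

noncomputable def th (I : Finset (Fin k)) : ℚ := Int.fract (∑ s ∈ I, (m s : ℚ) / (n s : ℚ))

noncomputable def cc (Q : ℂ[X]) (I : Finset (Fin k)) : ℂ :=
  (-1 : ℂ) ^ I.card * Q.eval (∑ s ∈ I, μ s) * E (∑ s ∈ I, (a s * m s : ℚ) / (n s : ℚ))

noncomputable def ww (x : ℤ) (s : Fin k) : ℂ := E (((m s * (a s - x) : ℤ) : ℚ) / ((n s : ℕ) : ℚ))

noncomputable def Bx (x : ℤ) (Q : ℂ[X]) : ℂ :=
  ∑ I : Finset (Fin k), cc a n m μ Q I * E (-(x : ℚ) * th n m I)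

lemma th_nonneg (I : Finset (Fin k)) : 0 ≤ th n m I := Int.fract_nonneg _

lemma th_lt_one (I : Finset (Fin k)) : th n m I < 1 := Int.fract_lt_one _

lemma Bx_eq_G (x : ℤ) (Q : ℂ[X]) :
    Bx a n m μ x Q = G μ (ww a n m x) Finset.univ Q := by
  rw [G, Finset.powerset_univ, Bx]
  refine Finset.sum_congr rfl fun I _ => ?_
  suffices h : E (∑ s ∈ I, (a s * m s : ℚ) / (n s : ℚ)) * E (-(x : ℚ) * th n m I)
      = ∏ s ∈ I, ww a n m x s by
    rw [cc, mul_assoc _ _ (E (-(x : ℚ) * th n m I)), h]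
  have h1 : E (-(x : ℚ) * th n m I) = E (-(x : ℚ) * ∑ s ∈ I, (m s : ℚ) / (n s : ℚ)) := by
    apply E_eq_of_sub_int
    refine ⟨x * ⌊∑ s ∈ I, (m s : ℚ) / (n s : ℚ)⌋, ?_⟩
    rw [th, Int.fract]
    push_cast
    ring
  rw [h1, ← E_add]
  rw [show (∑ s ∈ I, (a s * m s : ℚ) / (n s : ℚ)) + -(x : ℚ) * ∑ s ∈ I, (m s : ℚ) / (n s : ℚ)
      = ∑ s ∈ I, ((m s * (a s - x) : ℤ) : ℚ) / ((n s : ℕ) : ℚ) from ?_]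
  · exact E_sum I _
  rw [Finset.mul_sum, ← Finset.sum_add_distrib]
  refine Finset.sum_congr rfl fun s _ => ?_
  push_cast
  ring

lemma Bx_sub (x : ℤ) (Q R : ℂ[X]) :
    Bx a n m μ x (Q - R) = Bx a n m μ x Q - Bx a n m μ x R := by
  simp only [Bx, cc, eval_sub, ← Finset.sum_sub_distrib]
  refine Finset.sum_congr rfl fun I _ => by ring

lemma Bx_smul (x : ℤ) (c : ℂ) (Q : ℂ[X]) :
    Bx a n m μ x (c • Q) = c * Bx a n m μ x Q := by
  simp only [Bx, cc, eval_smul, Finset.mul_sum, smul_eq_mul]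
  refine Finset.sum_congr rfl fun I _ => by ring

lemma ww_eq_one {x : ℤ} {s : Fin k} (hns : 0 < n s) (h : (n s : ℤ) ∣ x - a s) :
    ww a n m x s = 1 := by
  obtain ⟨d, hd⟩ := h
  rw [ww, E_eq_one_iff]
  refine ⟨-(m s * d), ?_⟩
  have h1 : (a s - x : ℤ) = -((n s : ℤ) * d) := by linear_combination -hd
  have h2 : ((n s : ℚ)) ≠ 0 := Nat.cast_ne_zero.mpr hns.ne'
  rw [h1]
  push_cast
  field_simp

lemma ww_ne_one {x : ℤ} {s : Fin k} (hns : 0 < n s) (hco : Int.gcd (m s) (n s) = 1)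
    (h : ¬ (n s : ℤ) ∣ x - a s) : ww a n m x s ≠ 1 := by
  intro h1
  obtain ⟨z, hz⟩ := E_eq_one_iff.mp h1
  have h2 : ((n s : ℚ)) ≠ 0 := Nat.cast_ne_zero.mpr hns.ne'
  have h3 : ((m s * (a s - x) : ℤ) : ℚ) = (z : ℚ) * (n s : ℚ) := by
    field_simp at hz
    rw [mul_comm (z : ℚ)]
    exact_mod_cast hz
  have h4 : (m s * (a s - x) : ℤ) = z * (n s : ℤ) := by exact_mod_cast h3
  have hdvd : (n s : ℤ) ∣ m s * (a s - x) := ⟨z, by linear_combination h4⟩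
  have hcop : IsCoprime (n s : ℤ) (m s) := by
    rw [Int.isCoprime_iff_gcd_eq_one, Int.gcd_comm]
    exact hco
  have : (n s : ℤ) ∣ (a s - x) := hcop.dvd_of_dvd_mul_left hdvd
  exact h ((dvd_neg).mp (by rw [show -(x - a s) = a s - x by ring]; exact this))

end Bridge

section Main

variable {k : ℕ} (a : Fin k → ℤ) (n : Fin k → ℕ) (m : Fin k → ℤ) (μ : Fin k → ℂ)

noncomputable def NN (n : Fin k → ℕ) : ℕ := ∏ s, n s

lemma NN_pos (hn : ∀ s, 0 < n s) : 0 < NN n :=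
  Finset.prod_pos fun s _ => hn s

lemma NN_mul_int (hn : ∀ s, 0 < n s) (I : Finset (Fin k)) :
    ∃ z : ℤ, ((NN n : ℕ) : ℚ) * th n m I = z := by
  refine ⟨(∑ s ∈ I, ((NN n / n s : ℕ) : ℤ) * m s) - (NN n : ℤ) * ⌊∑ s ∈ I, (m s : ℚ) / (n s : ℚ)⌋, ?_⟩
  rw [th, Int.fract, mul_sub]
  push_cast
  congr 1
  rw [Finset.mul_sum]
  refine Finset.sum_congr rfl fun s _ => ?_
  have hdvd : n s ∣ NN n := Finset.dvd_prod_of_mem _ (Finset.mem_univ s)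
  have hne : ((n s : ℚ)) ≠ 0 := Nat.cast_ne_zero.mpr (hn s).ne'
  have hNN : ((NN n : ℚ)) = ((NN n / n s : ℕ) : ℚ) * ((n s : ℕ) : ℚ) := by
    rw_mod_cast [Nat.div_mul_cancel hdvd]
  rw [hNN]
  field_simp
  rw [Int.cast_div (Int.natCast_dvd_natCast.mpr hdvd) (by exact_mod_cast hne)]
  push_cast [Nat.cast_div hdvd hne]
  ring

/-- Forward main lemma : at a covered point all low-degree `Bx` vanish. -/
lemma main1 {mm : ℕ} (x : ℤ)
    (hcov : mm ≤ (Finset.univ.filter fun s : Fin k => (n s : ℤ) ∣ x - a s).card)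
    (hn : ∀ s, 0 < n s) (Q : ℂ[X]) (hQ : Q.degree < (mm : ℕ)) :
    Bx a n m μ x Q = 0 := by
  set T := Finset.univ.filter fun s : Fin k => (n s : ℤ) ∣ x - a s with hT
  rw [Bx_eq_G, ← Finset.union_compl T,
    G_union μ (ww a n m x) T disjoint_compl_right
      (fun t ht => ww_eq_one a n m (hn t) (Finset.mem_filter.mp ht).2) Q,
    DIter_eq_zero μ T Q (lt_of_lt_of_le hQ (by exact_mod_cast hcov)), G_zero]

/-- Converse main lemma : vanishing of all low-degree `Bx` forces covering. -/
lemma main2 {mm : ℕ} (x : ℤ) (hn : ∀ s, 0 < n s)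
    (hgcd : ∀ s, Int.gcd (m s) (n s) = 1) (hμ : ∀ s, μ s ≠ 0)
    (hB : ∀ Q : ℂ[X], Q.degree < (mm : ℕ) → Bx a n m μ x Q = 0) :
    mm ≤ (Finset.univ.filter fun s : Fin k => (n s : ℤ) ∣ x - a s).card := by
  by_contra hlt
  push_neg at hlt
  set T := Finset.univ.filter fun s : Fin k => (n s : ℤ) ∣ x - a s with hT
  have hQdeg : (X ^ T.card : ℂ[X]).degree = (T.card : ℕ) := degree_X_pow T.card
  have h0 : Bx a n m μ x (X ^ T.card) = 0 := by
    apply hB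
    rw [hQdeg]
    exact_mod_cast hlt
  rw [Bx_eq_G, ← Finset.union_compl T,
    G_union μ (ww a n m x) T disjoint_compl_right
      (fun t ht => ww_eq_one a n m (hn t) (Finset.mem_filter.mp ht).2) _] at h0
  obtain ⟨c, hc0, hC⟩ := DIter_exact μ T (fun s _ => hμ s) (X ^ T.card)
    (pow_ne_zero _ X_ne_zero) (natDegree_X_pow T.card)
  rw [hC, G_const] at h0
  rcases mul_eq_zero.mp h0 with h | h
  · exact hc0 h
  · obtain ⟨s, hs, hzero⟩ := Finset.prod_eq_zero_iff.mp h
    have hsT : s ∉ T := Finset.mem_compl.mp hs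
    have hnd : ¬ (n s : ℤ) ∣ x - a s := fun hd => hsT (Finset.mem_filter.mpr ⟨Finset.mem_univ s, hd⟩)
    exact ww_ne_one a n m (hn s) (hgcd s) hnd (by linear_combination -hzero)

end Main

end Stmt16Aux

open Stmt16Aux


open scoped Classical in
/-- **Theorem 4.1 (characterization of `m`-covers).**
Let `m ∈ ℤ⁺` and let `P₀,…,P_{m−1} ∈ ℂ[x]` have degrees `0,…,m−1` respectively.  Let
`m₁,…,m_k ∈ ℤ` and `μ₁,…,μ_k ∈ ℂ`.  If `A = {a s (n s)}_{s=1}^k` forms an `m`-cover of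
`ℤ`, then for all `θ ∈ [0,1)` and all `j ∈ {0,…,m−1}` we have
`∑_{I, {∑_{s∈I} m_s/n_s} = θ} (−1)^{|I|} P_j(∑_{s∈I} μ_s)
e^{2πi ∑_{s∈I} a_s m_s/n_s} = 0`.  Conversely, these equations imply that `A` is an
`m`-cover provided `gcd(m_s, n_s) = 1` and `μ_s ≠ 0` for all `s`. -/
theorem stmt16 (mm : ℕ) (hmm : 0 < mm) (P : ℕ → Polynomial ℂ)
    (hP : ∀ j < mm, (P j).degree = (j : ℕ))
    (k : ℕ) (a : Fin k → ℤ) (n : Fin k → ℕ) (hn : ∀ s, 0 < n s)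
    (m : Fin k → ℤ) (μ : Fin k → ℂ) :
    ((∀ x : ℤ,
        mm ≤ (Finset.univ.filter fun s : Fin k => (n s : ℤ) ∣ x - a s).card) →
      ∀ θ : ℝ, 0 ≤ θ → θ < 1 → ∀ j < mm,
        ∑ I ∈ Finset.univ.filter (fun I : Finset (Fin k) =>
            ((Int.fract (∑ s ∈ I, (m s : ℚ) / (n s : ℚ)) : ℚ) : ℝ) = θ),
          (-1 : ℂ) ^ I.card * (P j).eval (∑ s ∈ I, μ s) *
            Complex.exp (2 * Real.pi * Complex.I *
              ((∑ s ∈ I, (a s * m s : ℚ) / (n s : ℚ) : ℚ) : ℂ)) = 0) ∧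
    ((∀ s, Int.gcd (m s) (n s) = 1) → (∀ s, μ s ≠ 0) →
      (∀ θ : ℝ, 0 ≤ θ → θ < 1 → ∀ j < mm,
        ∑ I ∈ Finset.univ.filter (fun I : Finset (Fin k) =>
            ((Int.fract (∑ s ∈ I, (m s : ℚ) / (n s : ℚ)) : ℚ) : ℝ) = θ),
          (-1 : ℂ) ^ I.card * (P j).eval (∑ s ∈ I, μ s) *
            Complex.exp (2 * Real.pi * Complex.I *
              ((∑ s ∈ I, (a s * m s : ℚ) / (n s : ℚ) : ℚ) : ℂ)) = 0) →
      ∀ x : ℤ,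
        mm ≤ (Finset.univ.filter fun s : Fin k => (n s : ℤ) ∣ x - a s).card) := by
  constructor
  · -- Forward direction
    intro hcov θ hθ0 hθ1 j hj
    have hdegPj : (P j).degree < (mm : ℕ) := by
      rw [hP j hj]
      exact_mod_cast hj
    set F := Finset.univ.filter (fun I : Finset (Fin k) =>
      ((Int.fract (∑ s ∈ I, (m s : ℚ) / (n s : ℚ)) : ℚ) : ℝ) = θ) with hF
    have hmemF : ∀ I : Finset (Fin k), I ∈ F ↔ ((th n m I : ℚ) : ℝ) = θ := by
      intro I
      rw [hF, Finset.mem_filter]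
      exact ⟨fun h => h.2, fun h => ⟨Finset.mem_univ I, h⟩⟩
    suffices hS : ∑ I ∈ F, cc a n m μ (P j) I = 0 by exact hS
    rcases F.eq_empty_or_nonempty with h | ⟨I₀, hI₀⟩
    · rw [h, Finset.sum_empty]
    have hθq : ((th n m I₀ : ℚ) : ℝ) = θ := (hmemF I₀).mp hI₀
    set q₀ := th n m I₀ with hq₀
    have horth : ∀ I : Finset (Fin k),
        ∑ x ∈ Finset.range (NN n), E ((x : ℚ) * (q₀ - th n m I))
          = if q₀ = th n m I then ((NN n : ℕ) : ℂ) else 0 := fun I =>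
      orth (NN n) (NN_pos n hn) q₀ (th n m I) (NN_mul_int n m hn I₀) (NN_mul_int n m hn I)
        (th_nonneg n m I₀) (th_lt_one n m I₀) (th_nonneg n m I) (th_lt_one n m I)
    have hfilter : Finset.univ.filter (fun I : Finset (Fin k) => q₀ = th n m I) = F := by
      ext I
      rw [Finset.mem_filter, hmemF I]
      constructor
      · rintro ⟨_, h⟩
        rw [← h]
        exact hθq
      · intro h
        exact ⟨Finset.mem_univ I, (Rat.cast_injective (α := ℝ) (h.trans hθq.symm)).symm⟩
    have key : ∑ x ∈ Finset.range (NN n), E ((x : ℚ) * q₀) * Bx a n m μ (x : ℤ) (P j)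
        = ((NN n : ℕ) : ℂ) * ∑ I ∈ F, cc a n m μ (P j) I := by
      calc ∑ x ∈ Finset.range (NN n), E ((x : ℚ) * q₀) * Bx a n m μ (x : ℤ) (P j)
          = ∑ x ∈ Finset.range (NN n), ∑ I : Finset (Fin k),
              cc a n m μ (P j) I * E ((x : ℚ) * (q₀ - th n m I)) := by
            refine Finset.sum_congr rfl fun x _ => ?_
            rw [Bx, Finset.mul_sum]
            refine Finset.sum_congr rfl fun I _ => ?_
            have hx : ((x : ℤ) : ℚ) = (x : ℚ) := by push_cast; ring
            rw [hx, show E ((x : ℚ) * q₀) * (cc a n m μ (P j) I * E (-(x : ℚ) * th n m I))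
              = cc a n m μ (P j) I * (E ((x : ℚ) * q₀) * E (-(x : ℚ) * th n m I)) from by ring,
              ← E_add, show (x : ℚ) * q₀ + -(x : ℚ) * th n m I = (x : ℚ) * (q₀ - th n m I) from by
                ring]
        _ = ∑ I : Finset (Fin k), ∑ x ∈ Finset.range (NN n),
              cc a n m μ (P j) I * E ((x : ℚ) * (q₀ - th n m I)) := Finset.sum_comm
        _ = ∑ I : Finset (Fin k),
              cc a n m μ (P j) I * (if q₀ = th n m I then ((NN n : ℕ) : ℂ) else 0) := by
            refine Finset.sum_congr rfl fun I _ => ?_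
            rw [← Finset.mul_sum, horth I]
        _ = ∑ I : Finset (Fin k),
              (if q₀ = th n m I then ((NN n : ℕ) : ℂ) * cc a n m μ (P j) I else 0) := by
            refine Finset.sum_congr rfl fun I _ => ?_
            rw [mul_ite, mul_zero, mul_comm]
        _ = ∑ I ∈ Finset.univ.filter (fun I : Finset (Fin k) => q₀ = th n m I),
              ((NN n : ℕ) : ℂ) * cc a n m μ (P j) I := (Finset.sum_filter _ _).symm
        _ = ((NN n : ℕ) : ℂ) * ∑ I ∈ F, cc a n m μ (P j) I := by
            rw [hfilter, Finset.mul_sum]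
    have hzero : ∑ x ∈ Finset.range (NN n), E ((x : ℚ) * q₀) * Bx a n m μ (x : ℤ) (P j) = 0 := by
      refine Finset.sum_eq_zero fun x _ => ?_
      rw [main1 a n m μ (x : ℤ) (hcov (x : ℤ)) hn (P j) hdegPj, mul_zero]
    rw [hzero] at key
    have hNne : ((NN n : ℕ) : ℂ) ≠ 0 := Nat.cast_ne_zero.mpr (NN_pos n hn).ne'
    exact (mul_eq_zero.mp key.symm).resolve_left hNne
  · -- Converse direction
    intro hgcd hμ hS x
    apply main2 a n m μ x hn hgcd hμ
    intro Q hQ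
    refine span_lemma mm hmm P hP (fun Q => Bx a n m μ x Q)
      (Bx_sub a n m μ x) (Bx_smul a n m μ x) ?_ Q hQ
    intro j hj
    have hmaps : ∀ I ∈ (Finset.univ : Finset (Finset (Fin k))),
        ((th n m I : ℚ) : ℝ) ∈ Finset.univ.image (fun I : Finset (Fin k) => ((th n m I : ℚ) : ℝ)) :=
      fun I _ => Finset.mem_image_of_mem _ (Finset.mem_univ I)
    have hfib := Finset.sum_fiberwise_of_maps_to hmaps
      (fun I => cc a n m μ (P j) I * E (-(x : ℚ) * th n m I))
    show ∑ I : Finset (Fin k), cc a n m μ (P j) I * E (-(x : ℚ) * th n m I) = 0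
    rw [← hfib]
    refine Finset.sum_eq_zero fun v hv => ?_
    obtain ⟨I₀, _, hI₀⟩ := Finset.mem_image.mp hv
    have hv0 : (0 : ℝ) ≤ v := by rw [← hI₀]; exact_mod_cast th_nonneg n m I₀
    have hv1 : v < 1 := by rw [← hI₀]; exact_mod_cast th_lt_one n m I₀
    have hS' : ∑ I ∈ Finset.univ.filter
        (fun I : Finset (Fin k) => ((th n m I : ℚ) : ℝ) = v), cc a n m μ (P j) I = 0 :=
      hS v hv0 hv1 j hj
    calc ∑ I ∈ Finset.univ.filter
          (fun I : Finset (Fin k) => ((th n m I : ℚ) : ℝ) = v),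
            cc a n m μ (P j) I * E (-(x : ℚ) * th n m I)
        = ∑ I ∈ Finset.univ.filter
            (fun I : Finset (Fin k) => ((th n m I : ℚ) : ℝ) = v),
              E (-(x : ℚ) * th n m I₀) * cc a n m μ (P j) I := by
          refine Finset.sum_congr rfl fun I hI => ?_
          have : th n m I = th n m I₀ :=
            Rat.cast_injective (α := ℝ) ((Finset.mem_filter.mp hI).2.trans hI₀.symm)
          rw [this, mul_comm]
      _ = E (-(x : ℚ) * th n m I₀) * ∑ I ∈ Finset.univ.filter
            (fun I : Finset (Fin k) => ((th n m I : ℚ) : ℝ) = v), cc a n m μ (P j) I := by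
          rw [Finset.mul_sum]
      _ = 0 := by rw [hS', mul_zero]
end

section
/- Let p be a prime, h ∈ ℕ and a ∈ ℤ. Then the generalized binomial coefficient C(a−1, p^h−1) = (a−1)(a−2)⋯(a−p^h+1)/(p^h−1)! satisfies C(a−1, p^h−1) ≡ 1 (mod p) if p^h divides a, and C(a−1, p^h−1) ≡ 0 (mod p) otherwise. -/
/-!
Modulo `p`, the function `x ↦ C(x, n)` on `ℤ` is periodic with period `p ^ h` whenever
`n < p ^ h`, so `C(a - 1, p ^ h - 1)` only depends on the residue `r = a mod p ^ h`. For `r = 0` it is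
`C(-1, p ^ h - 1) = (-1) ^ (p ^ h - 1)`, which is `1` modulo `p` because `(-1) ^ (p ^ h) = -1` in
characteristic `p`. For `0 < r < p ^ h` it is the ordinary binomial coefficient `C(r - 1, p ^ h - 1)`,
which vanishes since `r - 1 < p ^ h - 1`.
-/

open Finset Function

theorem Function.Periodic.int_emod {α : Type*} {f : ℤ → α} {c : ℤ} (hf : Periodic f c) (x : ℤ) :
    f (x % c) = f x := by
  simpa [Int.emod_def, mul_comm] using hf.sub_int_mul_eq (x / c)

namespace Ring

theorem choose_neg_one_int (n : ℕ) : choose (-1 : ℤ) n = (-1) ^ n := by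
  rw [choose, show (-1 : ℤ) - n + 1 = -n by ring]
  exact multichoose_neg_self n

theorem choose_int_eq_zero_of_lt {x : ℤ} {n : ℕ} (hx : 0 ≤ x) (hxn : x < n) : choose x n = 0 := by
  lift x to ℕ using hx
  rw [choose_natCast, Nat.choose_eq_zero_of_lt (by exact_mod_cast hxn), Nat.cast_zero]

/-- In Vandermonde's expansion of `C(p ^ h + x, n)`, every term other than `C(x, n)` has a factor
`C(p ^ h, i)` with `0 < i < p ^ h`, which is divisible by `p`. -/
theorem periodic_intCast_choose_zmod {p : ℕ} (hp : p.Prime) {h n : ℕ} (hn : n < p ^ h) :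
    Periodic (fun x : ℤ => ((choose x n : ℤ) : ZMod p)) ((p : ℤ) ^ h) := by
  intro x
  have hvan : choose (((p ^ h : ℕ) : ℤ) + x) n =
      ∑ ij ∈ antidiagonal n, choose ((p ^ h : ℕ) : ℤ) ij.1 * choose x ij.2 :=
    add_choose_eq n (Commute.all _ _)
  show ((choose (x + (p : ℤ) ^ h) n : ℤ) : ZMod p) = ((choose x n : ℤ) : ZMod p)
  rw [add_comm, ← Nat.cast_pow, hvan, Int.cast_sum,
    sum_eq_single_of_mem ((0 : ℕ), n) (by simp) ?_]
  · simp
  rintro ⟨i, j⟩ hij hne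
  have hi : i ≠ 0 := by rintro rfl; simp_all
  have hip : i ≠ p ^ h := by simp at hij; omega
  have hdvd : (((p ^ h).choose i : ℕ) : ZMod p) = 0 :=
    (ZMod.natCast_eq_zero_iff _ _).mpr (hp.dvd_choose_pow hi hip)
  rw [choose_natCast, Int.cast_mul, Int.cast_natCast, hdvd, zero_mul]

end Ring

theorem ZMod.neg_one_pow_prime_pow_sub_one (p : ℕ) [Fact p.Prime] (h : ℕ) :
    (-1 : ZMod p) ^ (p ^ h - 1) = 1 := by
  have key : (-1 : ZMod p) ^ (p ^ h - 1) * (-1) = -1 := by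
    rw [← pow_succ, Nat.sub_add_cancel (Nat.one_le_pow _ _ (Fact.out : p.Prime).pos),
      ZMod.pow_card_pow]
  simpa using key

/-- **Lemma 4.2.**
Let `p` be a prime, `h ∈ ℕ` and `a ∈ ℤ`.  Then the generalized binomial coefficient
`C(a−1, p^h−1)` is congruent modulo `p` to `1` if `p^h ∣ a`, and to `0` otherwise. -/
theorem stmt17 (p : ℕ) (hp : p.Prime) (h : ℕ) (a : ℤ) :
    Ring.choose (a - 1) (p ^ h - 1) ≡
      (if (p : ℤ) ^ h ∣ a then 1 else 0) [ZMOD (p : ℤ)] := by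
  have := Fact.mk hp
  have hq : 0 < (p : ℤ) ^ h := pow_pos (by exact_mod_cast hp.pos) h
  have hreduce :=
    ((Ring.periodic_intCast_choose_zmod hp (Nat.sub_lt (pow_pos hp.pos h) one_pos)).sub_const
      1).int_emod a
  rw [← ZMod.intCast_eq_intCast_iff, ← hreduce]
  split_ifs with hdvd
  · rw [Int.emod_eq_zero_of_dvd hdvd, zero_sub, Ring.choose_neg_one_int, Int.cast_pow,
      Int.cast_neg, Int.cast_one, ZMod.neg_one_pow_prime_pow_sub_one]
  · have hr : 0 < a % (p : ℤ) ^ h :=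
      lt_of_le_of_ne (Int.emod_nonneg a hq.ne') (Ne.symm (mt Int.dvd_of_emod_eq_zero hdvd))
    have hr_lt := Int.emod_lt_of_pos a hq
    have hq_cast : ((p ^ h : ℕ) : ℤ) = (p : ℤ) ^ h := Nat.cast_pow p h
    rw [Ring.choose_int_eq_zero_of_lt (by omega) (by omega)]
end

section
/- Let A = {a_s(n_s)}_{s=1}^k be a finite system of residue classes and let m_1,...,m_k ∈ ℤ with gcd(m_s, n_s) = 1 for each s. Put S = { {Σ_{s∈I} m_s/n_s} : I ⊆ {1,...,k} }. If there exists an integer a such that each of the |S| consecutive integers a, a+1, ..., a+|S|−1 is covered by A at least m times (i.e., w_A(z) ≥ m for all z ∈ {a,...,a+|S|−1}), then A forms an m-cover of ℤ. -/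
open Polynomial Finset Matrix

noncomputable def ee (q : ℚ) : ℂ := Complex.exp (2 * Real.pi * Complex.I * q)

lemma ee_ne_zero (q : ℚ) : ee q ≠ 0 := Complex.exp_ne_zero _

lemma ee_add (q r : ℚ) : ee (q + r) = ee q * ee r := by
  rw [ee, ee, ee, ← Complex.exp_add]
  push_cast
  ring_nf

lemma ee_zpow (q : ℚ) (x : ℤ) : ee q ^ x = ee (x * q) := by
  rw [ee, ee, ← Complex.exp_int_mul]
  push_cast
  ring_nf

lemma ee_eq_one_iff (q : ℚ) : ee q = 1 ↔ ∃ z : ℤ, q = z := by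
  rw [ee, Complex.exp_eq_one_iff]
  constructor
  · rintro ⟨z, hz⟩
    refine ⟨z, ?_⟩
    have h2 : (2 * Real.pi * Complex.I : ℂ) ≠ 0 := by
      simp [Real.pi_ne_zero, Complex.I_ne_zero]
    rw [mul_comm (z : ℂ)] at hz
    have : (q : ℂ) = (z : ℂ) := mul_left_cancel₀ h2 hz
    exact_mod_cast this
  · rintro ⟨z, rfl⟩
    exact ⟨z, by push_cast; ring⟩

lemma ee_int (z : ℤ) : ee z = 1 := (ee_eq_one_iff _).2 ⟨z, rfl⟩

lemma ee_fract (q : ℚ) : ee (Int.fract q) = ee q := by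
  conv_rhs => rw [← Int.fract_add_floor q, ee_add, ee_int, mul_one]

lemma ee_inj {q r : ℚ} (hq0 : 0 ≤ q) (hq1 : q < 1) (hr0 : 0 ≤ r) (hr1 : r < 1)
    (h : ee q = ee r) : q = r := by
  have h1 : ee (q - r) = 1 := by
    have := ee_add (q - r) r
    rw [sub_add_cancel, h] at this
    field_simp [ee_ne_zero r] at this
    exact this.symm
  obtain ⟨z, hz⟩ := (ee_eq_one_iff _).1 h1
  have hz0 : z = 0 := by
    have h1 : (z : ℚ) < 1 := by rw [← hz]; linarith
    have h2 : (-1 : ℚ) < z := by rw [← hz]; linarith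
    have : z < 1 := by exact_mod_cast h1
    have : -1 < z := by exact_mod_cast h2
    omega
  rw [hz0] at hz
  have : q - r = 0 := by exact_mod_cast hz
  linarith

lemma ee_frac_eq_one_iff {mz xa : ℤ} {nn : ℕ} (hn : 0 < nn) (hcop : Int.gcd mz nn = 1) :
    ee ((mz : ℚ) * (xa : ℚ) / (nn : ℚ)) = 1 ↔ (nn : ℤ) ∣ xa := by
  rw [ee_eq_one_iff]
  have hn0 : (nn : ℚ) ≠ 0 := by positivity
  constructor
  · rintro ⟨z, hz⟩
    have hz' : (mz : ℚ) * xa = z * nn := by field_simp at hz; linear_combination hz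
    have : mz * xa = z * nn := by exact_mod_cast hz'
    have hdvd : (nn : ℤ) ∣ mz * xa := ⟨z, by linarith⟩
    exact Int.dvd_of_dvd_mul_right_of_gcd_one hdvd (by rwa [Int.gcd_comm])
  · rintro ⟨c, rfl⟩
    refine ⟨mz * c, ?_⟩
    push_cast
    field_simp

lemma factor_ne_zero (ζ : ℂ) : (1 - C ζ * X : ℂ[X]) ≠ 0 := by
  intro h
  have := congrArg (fun p => Polynomial.coeff p 0) h
  simp at this

lemma rootMultiplicity_factor (ζ : ℂ) :
    rootMultiplicity 1 (1 - C ζ * X : ℂ[X]) = if ζ = 1 then 1 else 0 := by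
  split_ifs with h
  · subst h
    have h1 : (1 - C 1 * X : ℂ[X]) = C (-1) * (X - C 1) := by rw [ _root_.map_one, map_neg,  _root_.map_one]; ring
    rw [h1, rootMultiplicity_mul (by rw [← h1]; exact factor_ne_zero 1),
      rootMultiplicity_C, rootMultiplicity_X_sub_C_self]
  · apply rootMultiplicity_eq_zero
    simp [IsRoot, sub_eq_zero]
    exact fun hh => h hh.symm

lemma rootMultiplicity_finset_prod {ι : Type*} (s : Finset ι) (p : ι → ℂ[X])
    (h : ∀ i ∈ s, p i ≠ 0) :
    rootMultiplicity 1 (∏ i ∈ s, p i) = ∑ i ∈ s, rootMultiplicity 1 (p i) := by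
  induction s using Finset.cons_induction with
  | empty => simp [rootMultiplicity_eq_zero]
  | cons i s hi ih =>
    rw [Finset.prod_cons, Finset.sum_cons, rootMultiplicity_mul, ih]
    · exact fun j hj => h j (Finset.mem_cons_of_mem hj)
    · refine mul_ne_zero (h i (Finset.mem_cons_self i s)) ?_
      rw [Finset.prod_ne_zero_iff]
      exact fun j hj => h j (Finset.mem_cons_of_mem hj)

lemma ee_sum {ι : Type*} (I : Finset ι) (g : ι → ℚ) :
    ee (∑ i ∈ I, g i) = ∏ i ∈ I, ee (g i) := by
  induction I using Finset.cons_induction with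
  | empty => simpa using ee_int 0
  | cons i s hi ih => rw [Finset.sum_cons, Finset.prod_cons, ee_add, ih]

section main

variable {k : ℕ} (a : Fin k → ℤ) (n : Fin k → ℕ) (m : Fin k → ℤ)

noncomputable def zf (x : ℤ) (s : Fin k) : ℂ :=
  ee ((m s : ℚ) * ((x - a s : ℤ) : ℚ) / (n s : ℚ))

noncomputable def fpoly (x : ℤ) : ℂ[X] := ∏ s, (1 - C (zf a n m x s) * X)

lemma fpoly_ne_zero (x : ℤ) : fpoly a n m x ≠ 0 := by
  rw [fpoly, Finset.prod_ne_zero_iff]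
  exact fun s _ => factor_ne_zero _

lemma rootMultiplicity_fpoly (hn : ∀ s, 0 < n s) (hcop : ∀ s, Int.gcd (m s) (n s) = 1)
    (x : ℤ) :
    rootMultiplicity 1 (fpoly a n m x)
      = (Finset.univ.filter fun s : Fin k => (n s : ℤ) ∣ x - a s).card := by
  rw [fpoly, rootMultiplicity_finset_prod _ _ (fun s _ => factor_ne_zero _)]
  have h1 : ∀ s : Fin k, zf a n m x s = 1 ↔ (n s : ℤ) ∣ x - a s := by
    intro s
    rw [zf]
    exact ee_frac_eq_one_iff (hn s) (hcop s)
  calc ∑ s : Fin k, rootMultiplicity 1 (1 - C (zf a n m x s) * X)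
      = ∑ s : Fin k, if (n s : ℤ) ∣ x - a s then 1 else 0 := by
        refine Finset.sum_congr rfl fun s _ => ?_
        rw [rootMultiplicity_factor]
        simp only [h1 s]
    _ = ∑ s ∈ Finset.univ.filter (fun s : Fin k => (n s : ℤ) ∣ x - a s), 1 :=
        (Finset.sum_filter _ _).symm
    _ = _ := by simp

noncomputable def qq (I : Finset (Fin k)) : ℚ := ∑ s ∈ I, (m s : ℚ) / (n s : ℚ)

noncomputable def rr (I : Finset (Fin k)) : ℚ := ∑ s ∈ I, (m s : ℚ) * (a s : ℚ) / (n s : ℚ)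

noncomputable def cpoly (θ : ℚ) : ℂ[X] :=
  ∑ I ∈ Finset.univ.filter (fun I : Finset (Fin k) => Int.fract (qq n m I) = θ),
    C ((-1 : ℂ) ^ I.card * ee (-(rr a n m I))) * X ^ I.card

lemma prod_zf (hn : ∀ s, 0 < n s) (x : ℤ) (I : Finset (Fin k)) :
    ∏ s ∈ I, zf a n m x s = ee (Int.fract (qq n m I)) ^ x * ee (-(rr a n m I)) := by
  have h1 : ∏ s ∈ I, zf a n m x s = ee ((x : ℚ) * qq n m I + -(rr a n m I)) := by
    simp only [zf]
    rw [← ee_sum]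
    congr 1
    rw [qq, rr, Finset.mul_sum, ← sub_eq_add_neg, ← Finset.sum_sub_distrib]
    refine Finset.sum_congr rfl fun s _ => ?_
    have : (n s : ℚ) ≠ 0 := by have := hn s; positivity
    push_cast
    field_simp
  rw [h1, ee_add, ← ee_zpow, ee_fract]

lemma fpoly_expand (hn : ∀ s, 0 < n s) (x : ℤ) :
    fpoly a n m x = ∑ θ ∈ Finset.image (fun I : Finset (Fin k) => Int.fract (qq n m I))
        Finset.univ,
      C (ee θ ^ x) * cpoly a n m θ := by
  have step1 : fpoly a n m x
      = ∑ I : Finset (Fin k), ∏ s ∈ I, (-(C (zf a n m x s) * X)) := by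
    rw [fpoly]
    have : ∀ s : Fin k, (1 - C (zf a n m x s) * X) = (-(C (zf a n m x s) * X)) + 1 := by
      intro s; ring
    rw [Finset.prod_congr rfl fun s _ => this s, Finset.prod_add]
    simp [Finset.powerset_univ]
  have step2 : ∀ I : Finset (Fin k), ∏ s ∈ I, (-(C (zf a n m x s) * X))
      = C (ee (Int.fract (qq n m I)) ^ x)
        * (C ((-1 : ℂ) ^ I.card * ee (-(rr a n m I))) * X ^ I.card) := by
    intro I
    have h2 : ∀ s ∈ I, (-(C (zf a n m x s) * X)) = C (-(zf a n m x s)) * X := by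
      intro s _; rw [map_neg]; ring
    have h3 : ∏ s ∈ I, -zf a n m x s = (-1 : ℂ) ^ I.card * ∏ s ∈ I, zf a n m x s := by
      rw [← Finset.prod_const, ← Finset.prod_mul_distrib]
      simp [neg_one_mul]
    rw [Finset.prod_congr rfl h2, Finset.prod_mul_distrib, Finset.prod_const, ← map_prod,
      h3, prod_zf a n m hn x I]
    simp only [ _root_.map_mul]
    ring
  rw [step1, Finset.sum_congr rfl fun I _ => step2 I]
  rw [← Finset.sum_fiberwise_of_maps_to (g := fun I : Finset (Fin k) => Int.fract (qq n m I))
    (fun I _ => Finset.mem_image_of_mem (fun I : Finset (Fin k) => Int.fract (qq n m I))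
      (Finset.mem_univ I))]
  refine Finset.sum_congr rfl fun θ hθ => ?_
  rw [cpoly, Finset.mul_sum]
  refine Finset.sum_congr rfl fun I hI => ?_
  rw [Finset.mem_filter] at hI
  rw [hI.2]

end main


/-- **Remark 4.1 (local-global principle for `m`-covers).**
Let `A = {a s (n s)}_{s=1}^k` and let `m₁,…,m_k ∈ ℤ` be relatively prime to
`n₁,…,n_k` respectively.  Put `S = { {∑_{s∈I} m_s/n_s} : I ⊆ {1,…,k} }`.  If `A`
covers `|S|` consecutive integers at least `m` times, then `A` is an `m`-cover of
`ℤ`. -/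
theorem stmt18 (k : ℕ) (a : Fin k → ℤ) (n : Fin k → ℕ) (hn : ∀ s, 0 < n s)
    (m : Fin k → ℤ) (hcop : ∀ s, Int.gcd (m s) (n s) = 1) (mm : ℕ)
    (hloc : ∃ b : ℤ, ∀ z : ℤ, b ≤ z →
      z < b + (Finset.image
          (fun I : Finset (Fin k) => Int.fract (∑ s ∈ I, (m s : ℚ) / (n s : ℚ)))
          Finset.univ).card →
      mm ≤ (Finset.univ.filter fun s : Fin k => (n s : ℤ) ∣ z - a s).card) :
    ∀ x : ℤ, mm ≤ (Finset.univ.filter fun s : Fin k => (n s : ℤ) ∣ x - a s).card := by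
  classical
  obtain ⟨b, hb⟩ := hloc
  intro x
  set S' : Finset ℚ := Finset.image
    (fun I : Finset (Fin k) => Int.fract (∑ s ∈ I, (m s : ℚ) / (n s : ℚ)))
    Finset.univ with hS'
  set t := S'.card with ht
  set g : Fin t → ℚ := fun i => (S'.equivFin.symm i : ℚ) with hg
  have hgmem : ∀ i, g i ∈ S' := fun i => (S'.equivFin.symm i).2
  have hginj : Function.Injective g := fun i j h =>
    S'.equivFin.symm.injective (Subtype.ext h)
  have hmem01 : ∀ θ ∈ S', 0 ≤ θ ∧ θ < 1 := by
    intro θ hθ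
    rw [hS', Finset.mem_image] at hθ
    obtain ⟨I, -, rfl⟩ := hθ
    exact ⟨Int.fract_nonneg _, Int.fract_lt_one _⟩
  set u : Fin t → ℂ := fun i => ee (g i) with hu
  have huinj : Function.Injective u := by
    intro i j h
    apply hginj
    obtain h1 := hmem01 _ (hgmem i)
    obtain h2 := hmem01 _ (hgmem j)
    exact ee_inj h1.1 h1.2 h2.1 h2.2 h
  have hu0 : ∀ i, u i ≠ 0 := fun i => ee_ne_zero _
  set A : Matrix (Fin t) (Fin t) ℂ := Matrix.vandermonde u with hA
  have hdet : IsUnit A.det := by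
    rw [isUnit_iff_ne_zero]
    exact Matrix.det_vandermonde_ne_zero_iff.mpr huinj
  set B := A⁻¹ with hB
  have hAB : A * B = 1 := Matrix.mul_nonsing_inv A hdet
  -- the local hypothesis gives divisibility at b, b+1, ..., b+t-1
  have hdvd_f : ∀ j : Fin t, ((X : ℂ[X]) - C 1) ^ mm ∣ fpoly a n m (b + j) := by
    intro j
    have h1 : mm ≤ rootMultiplicity 1 (fpoly a n m (b + j)) := by
      rw [rootMultiplicity_fpoly a n m hn hcop]
      apply hb
      · have : (0 : ℤ) ≤ (j : ℤ) := Int.ofNat_nonneg _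
        linarith
      · have : (j : ℤ) < t := by exact_mod_cast j.2
        linarith
    exact dvd_trans (pow_dvd_pow _ h1) (pow_rootMultiplicity_dvd _ _)
  -- expansion indexed by Fin t
  have hSS : Finset.image (fun I : Finset (Fin k) => Int.fract (qq n m I)) Finset.univ = S' :=
    rfl
  have hexp : ∀ z : ℤ, fpoly a n m z = ∑ i : Fin t, C (u i ^ z) * cpoly a n m (g i) := by
    intro z
    rw [fpoly_expand a n m hn z, hSS,
      ← Finset.sum_coe_sort S' (fun θ => C (ee θ ^ z) * cpoly a n m θ)]
    exact (Equiv.sum_comp S'.equivFin.symm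
      (fun θ : {q // q ∈ S'} => C (ee (θ : ℚ) ^ z) * cpoly a n m (θ : ℚ))).symm
  set cp : Fin t → ℂ[X] := fun i => cpoly a n m (g i) with hcp
  set v : Fin t → ℂ[X] := fun j => fpoly a n m (b + j) with hv
  set c2 : Fin t → ℂ[X] := fun i => C (u i ^ b) * cp i with hc2
  set M : Matrix (Fin t) (Fin t) ℂ[X] := ((A.map C)ᵀ) with hM
  have hMv : M.mulVec c2 = v := by
    funext j
    simp only [Matrix.mulVec, dotProduct, hM, Matrix.transpose_apply, Matrix.map_apply,
      hA, Matrix.vandermonde_apply, hv, hc2]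
    rw [hexp (b + j)]
    refine Finset.sum_congr rfl fun l _ => ?_
    have h3 : u l ^ ((b : ℤ) + (j : ℤ)) = u l ^ b * (u l) ^ (j : ℕ) := by
      rw [zpow_add₀ (hu0 l), zpow_natCast]
    rw [h3,  _root_.map_mul]
    ring
  set N : Matrix (Fin t) (Fin t) ℂ[X] := ((B.map C)ᵀ) with hN
  have hNM : N * M = 1 := by
    rw [hN, hM, ← Matrix.transpose_mul, ← Matrix.map_mul, hAB, Matrix.map_one C
      (map_zero C) ( _root_.map_one C), Matrix.transpose_one]
  have hc2v : c2 = N.mulVec v := by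
    rw [← hMv, Matrix.mulVec_mulVec, hNM, Matrix.one_mulVec]
  have hdvd_c : ∀ i, ((X : ℂ[X]) - C 1) ^ mm ∣ cp i := by
    intro i
    have h1 : ((X : ℂ[X]) - C 1) ^ mm ∣ c2 i := by
      rw [hc2v]
      simp only [Matrix.mulVec, dotProduct]
      exact Finset.dvd_sum fun j _ => Dvd.dvd.mul_left (hdvd_f j) _
    have h2 : cp i = C (u i ^ (-b)) * c2 i := by
      rw [hc2, ← mul_assoc, ←  _root_.map_mul, ← zpow_add₀ (hu0 i), neg_add_cancel, zpow_zero,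
         _root_.map_one, one_mul]
    rw [h2]
    exact Dvd.dvd.mul_left h1 _
  have hx : ((X : ℂ[X]) - C 1) ^ mm ∣ fpoly a n m x := by
    rw [hexp x]
    exact Finset.dvd_sum fun i _ => Dvd.dvd.mul_left (hdvd_c i) _
  have hfin := (le_rootMultiplicity_iff (fpoly_ne_zero a n m x)).2 hx
  rwa [rootMultiplicity_fpoly a n m hn hcop] at hfin
end
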